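/- arXiv:2112.02142 — 7 statements merged into one kernel-verified Lean document; each statement's English description precedes it below -/
import Mathlib

section
/- Hypotheses 4, 5, 7, 8, 10, and 12 of Smullyan's last asylum puzzle are jointly inconsistent: there is no type I of inhabitants with predicates Sane, Doctor, Peculiar, Special : I → Prop, a function bestFriend : I → I, and inhabitants Tarr, Fether : I satisfying all of (4) ∀x, Peculiar(x) ↔ (Sane(x) ↔ ¬Doctor(x)); (5) ∀x, Special(x) ↔ ∀y, (¬Doctor(y) ↔ (Sane(y) ↔ Peculiar(x))); (7) ∀x ∀y, (Sane(x) ↔ Special(y)) → (Sane(bestFriend(x)) ↔ ¬Doctor(y)); (8) Sane(Tarr) ↔ ∀x, Doctor(x) → Sane(x); (10) Sane(Fether) ↔ ∀x, ¬Doctor(x) → ¬Sane(x); (12) Sane(Fether) ↔ Sane(Tarr). That is, these six hypotheses together imply False. -/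
theorem smullyan_asylum_six_hypotheses_inconsistent
    {I : Type*} (Sane Doctor Peculiar Special : I → Prop)
    (bestFriend : I → I) (Tarr Fether : I)
    (h4 : ∀ x, Peculiar x ↔ (Sane x ↔ ¬ Doctor x))
    (h5 : ∀ x, Special x ↔ ∀ y, (¬ Doctor y ↔ (Sane y ↔ Peculiar x)))
    (h7 : ∀ x y, (Sane x ↔ Special y) → (Sane (bestFriend x) ↔ ¬ Doctor y))
    (h8 : Sane Tarr ↔ ∀ x, Doctor x → Sane x)
    (h10 : Sane Fether ↔ ∀ x, ¬ Doctor x → ¬ Sane x)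
    (h12 : Sane Fether ↔ Sane Tarr) : False := by
  by_cases st : Sane Tarr
  · have sf : Sane Fether := h12.mpr st
    have hd := h8.mp st
    have hn := h10.mp sf
    have B : ∀ y, Sane y ↔ Doctor y := fun y =>
      ⟨fun s => by_contra fun nd => hn y nd s, hd y⟩
    have noPec : ∀ y, ¬ Peculiar y := fun y hp => by
      have := (h4 y).mp hp; have := B y; tauto
    have SpecAll : ∀ x, Special x := fun x =>
      (h5 x).mpr (fun y => by have := B y; have := noPec x; tauto)
    have h1 := h7 Tarr (bestFriend Tarr)
      ⟨fun _ => SpecAll _, fun _ => st⟩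
    exact noPec _ ((h4 _).mpr h1)
  · have sf : ¬ Sane Fether := fun h => st (h12.mp h)
    have hd : ∃ d, Doctor d ∧ ¬ Sane d := by
      by_contra h; push_neg at h; exact st (h8.mpr fun x dx => h x dx)
    have hp : ∃ p, ¬ Doctor p ∧ Sane p := by
      by_contra h; push_neg at h
      exact sf (h10.mpr fun x nd s => (h x nd) s)
    obtain ⟨d, dd, ds⟩ := hd
    obtain ⟨p, pd, ps⟩ := hp
    have pecp : Peculiar p := (h4 p).mpr (by tauto)
    by_cases hall : ∀ y, Peculiar y
    · have SpecAll : ∀ x, Special x := fun x =>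
        (h5 x).mpr (fun y => by have := (h4 y).mp (hall y); have := hall x; tauto)
    
      have h1 := h7 p d ⟨fun _ => SpecAll _, fun _ => ps⟩
      have h2 := h7 p p ⟨fun _ => SpecAll _, fun _ => ps⟩
      tauto
    · push_neg at hall
      obtain ⟨z, hz⟩ := hall
      have noSpec : ∀ y, ¬ Special y := fun y sy => by
        have hy := (h5 y).mp sy
        by_cases py : Peculiar y
        · exact hz ((h4 z).mpr (by have := hy z; tauto))
        · have := hy p; tauto
      have h1 := h7 d d ⟨fun s => absurd s ds, fun s => absurd s (noSpec d)⟩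
      have h2 := h7 d p ⟨fun s => absurd s ds, fun s => absurd s (noSpec p)⟩
      tauto
end

section
/- The full set of hypotheses 1–12 of Smullyan's last asylum puzzle is inconsistent: there is no type I of inhabitants with predicates Sane, Doctor, Peculiar, Special : I → Prop, a function bestFriend : I → I, and inhabitants Tarr, Fether : I satisfying all of (1) Doctor(Tarr); (2) Doctor(Fether); (3) ∃x, Doctor(x) ∧ x ≠ Tarr ∧ x ≠ Fether; (4) ∀x, Peculiar(x) ↔ (Sane(x) ↔ ¬Doctor(x)); (5) ∀x, Special(x) ↔ ∀y, (¬Doctor(y) ↔ (Sane(y) ↔ Peculiar(x))); (6) ∃x, Sane(x); (7) ∀x ∀y, (Sane(x) ↔ Special(y)) → (Sane(bestFriend(x)) ↔ ¬Doctor(y)); (8) Sane(Tarr) ↔ ∀x, Doctor(x) → Sane(x); (9) Sane(Tarr) ↔ ∃x, ¬Doctor(x) ∧ ¬Sane(x); (10) Sane(Fether) ↔ ∀x, ¬Doctor(x) → ¬Sane(x); (11) Sane(Fether) ↔ ∃x, Doctor(x) ∧ Sane(x); (12) Sane(Fether) ↔ Sane(Tarr). That is, these twelve hypotheses together imply False.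 -/
theorem smullyan_asylum_all_hypotheses_inconsistent
    {I : Type*} (Sane Doctor Peculiar Special : I → Prop)
    (bestFriend : I → I) (Tarr Fether : I)
    (h1 : Doctor Tarr)
    (h2 : Doctor Fether)
    (h3 : ∃ x, Doctor x ∧ x ≠ Tarr ∧ x ≠ Fether)
    (h4 : ∀ x, Peculiar x ↔ (Sane x ↔ ¬ Doctor x))
    (h5 : ∀ x, Special x ↔ ∀ y, (¬ Doctor y ↔ (Sane y ↔ Peculiar x)))
    (h6 : ∃ x, Sane x)
    (h7 : ∀ x y, (Sane x ↔ Special y) → (Sane (bestFriend x) ↔ ¬ Doctor y))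
    (h8 : Sane Tarr ↔ ∀ x, Doctor x → Sane x)
    (h9 : Sane Tarr ↔ ∃ x, ¬ Doctor x ∧ ¬ Sane x)
    (h10 : Sane Fether ↔ ∀ x, ¬ Doctor x → ¬ Sane x)
    (h11 : Sane Fether ↔ ∃ x, Doctor x ∧ Sane x)
    (h12 : Sane Fether ↔ Sane Tarr) : False := by
  by_cases hT : Sane Tarr
  · have hF := h12.mpr hT
    have hdoc : ∀ x, Doctor x → Sane x := h8.mp hT
    have hnd : ∀ x, ¬ Doctor x → ¬ Sane x := h10.mp hF
    have hpec : ∀ x, ¬ Peculiar x := by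
      intro x hp
      have := (h4 x).mp hp
      by_cases hd : Doctor x
      · exact (this.mp (hdoc x hd)) hd
      · exact hnd x hd (this.mpr hd)
    have hspec : ∀ x, Special x := by
      intro x
      refine (h5 x).mpr fun y => ?_
      constructor
      · intro hy
        constructor
        · intro hs; exact absurd hs (hnd y hy)
        · intro hp; exact absurd hp (hpec x)
      · intro hiff hd
        exact (hpec x) (hiff.mp (hdoc y hd))
    obtain ⟨w, hw1, _⟩ := h9.mp hT
    have e1 := h7 Tarr Tarr (iff_of_true hT (hspec Tarr))
    have e2 := h7 Tarr w (iff_of_true hT (hspec w))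
    exact (e1.mp (e2.mpr hw1)) h1
  · have hF : ¬ Sane Fether := fun s => hT (h12.mp s)
    have hnd : ∀ x, ¬ Doctor x → Sane x := by
      have := mt h9.mpr hT
      push_neg at this
      exact this
    have hdoc : ∀ x, Doctor x → ¬ Sane x := by
      have := mt h11.mpr hF
      push_neg at this
      exact this
    have hpec : ∀ x, Peculiar x := by
      intro x
      refine (h4 x).mpr ?_
      constructor
      · intro hs hd; exact hdoc x hd hs
      · exact hnd x
    have hspec : ∀ x, Special x := by
      intro x
      refine (h5 x).mpr fun y => ?_
      constructor
      · intro hy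
        exact iff_of_true (hnd y hy) (hpec x)
      · intro hiff hd
        exact hdoc y hd (hiff.mpr (hpec x))
    obtain ⟨s, hs⟩ := h6
    have hsnd : ¬ Doctor s := fun hd => hdoc s hd hs
    have e1 := h7 s Tarr (iff_of_true hs (hspec Tarr))
    have e2 := h7 s s (iff_of_true hs (hspec s))
    exact (e1.mp (e2.mpr hsnd)) h1
end

section
/- First case of Theorem 2: the hypotheses (4) ∀x, Peculiar(x) ↔ (Sane(x) ↔ ¬Doctor(x)), (5) ∀x, Special(x) ↔ ∀y, (¬Doctor(y) ↔ (Sane(y) ↔ Peculiar(x))), (7) ∀x ∀y, (Sane(x) ↔ Special(y)) → (Sane(bestFriend(x)) ↔ ¬Doctor(y)), together with Sane(Tarr), ∀x, Doctor(x) → Sane(x), and ∀x, ¬Doctor(x) → ¬Sane(x), are jointly contradictory (imply False). -/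
theorem smullyan_theorem2_first_case
    {I : Type*} (Sane Doctor Peculiar Special : I → Prop)
    (bestFriend : I → I) (Tarr : I)
    (h4 : ∀ x, Peculiar x ↔ (Sane x ↔ ¬ Doctor x))
    (h5 : ∀ x, Special x ↔ ∀ y, (¬ Doctor y ↔ (Sane y ↔ Peculiar x)))
    (h7 : ∀ x y, (Sane x ↔ Special y) → (Sane (bestFriend x) ↔ ¬ Doctor y))
    (hTarr : Sane Tarr)
    (hDoc : ∀ x, Doctor x → Sane x)
    (hPat : ∀ x, ¬ Doctor x → ¬ Sane x) : False := by
  have hSD : ∀ x, Sane x ↔ Doctor x := fun x =>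
    ⟨fun hs => by_contra fun hd => hPat x hd hs, hDoc x⟩
  have hnp : ¬ Peculiar (bestFriend Tarr) := fun hp => by
    have := (h4 _).mp hp; have := hSD (bestFriend Tarr); tauto
  have hsp : Special (bestFriend Tarr) := (h5 _).mpr fun y => by
    have := hSD y; tauto
  have key := h7 Tarr (bestFriend Tarr) (iff_of_true hTarr hsp)
  have := hSD (bestFriend Tarr)
  tauto
end

section
/- Second case, first subcase of Theorem 2: the hypotheses (4) ∀x, Peculiar(x) ↔ (Sane(x) ↔ ¬Doctor(x)), (5) ∀x, Special(x) ↔ ∀y, (¬Doctor(y) ↔ (Sane(y) ↔ Peculiar(x))), (7) ∀x ∀y, (Sane(x) ↔ Special(y)) → (Sane(bestFriend(x)) ↔ ¬Doctor(y)), together with the existence of an insane doctor (∃x, Doctor(x) ∧ ¬Sane(x)), the existence of a sane patient (∃y, ¬Doctor(y) ∧ Sane(y)), and the assumptions that all doctors are insane (∀x, Doctor(x) → ¬Sane(x)) and all patients are sane (∀x, ¬Doctor(x) → Sane(x)), are jointly contradictory (imply False). -/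
theorem smullyan_theorem2_second_case_first_subcase
    {I : Type*} (Sane Doctor Peculiar Special : I → Prop)
    (bestFriend : I → I)
    (h4 : ∀ x, Peculiar x ↔ (Sane x ↔ ¬ Doctor x))
    (h5 : ∀ x, Special x ↔ ∀ y, (¬ Doctor y ↔ (Sane y ↔ Peculiar x)))
    (h7 : ∀ x y, (Sane x ↔ Special y) → (Sane (bestFriend x) ↔ ¬ Doctor y))
    (hInsaneDoc : ∃ x, Doctor x ∧ ¬ Sane x)
    (hSanePat : ∃ y, ¬ Doctor y ∧ Sane y)
    (hDoc : ∀ x, Doctor x → ¬ Sane x)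
    (hPat : ∀ x, ¬ Doctor x → Sane x) : False := by
  obtain ⟨d, hdD, hdS⟩ := hInsaneDoc
  obtain ⟨p, hpD, hpS⟩ := hSanePat
  have pec : ∀ x, Peculiar x := fun x =>
    (h4 x).mpr ⟨fun hs hd => hDoc x hd hs, fun _ => hPat x ‹¬ Doctor x›⟩
  have spec : ∀ x, Special x := fun x =>
    (h5 x).mpr fun y =>
      ⟨fun hnd => ⟨fun _ => pec x, fun _ => hPat y hnd⟩,
       fun h hd => hDoc y hd (h.mpr (pec x))⟩
  have h1 := h7 p d ⟨fun _ => spec d, fun _ => hpS⟩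
  have h2 := h7 p p ⟨fun _ => spec p, fun _ => hpS⟩
  exact h1.mp (h2.mpr hpD) hdD
end

section
/- If hypotheses (4) ∀x, Peculiar(x) ↔ (Sane(x) ↔ ¬Doctor(x)) and (5) ∀x, Special(x) ↔ ∀y, (¬Doctor(y) ↔ (Sane(y) ↔ Peculiar(x))) hold, x is peculiar (Peculiar(x)), and there exists an inhabitant z that is either a sane doctor or an insane patient (∃z, (Doctor(z) ∧ Sane(z)) ∨ (¬Doctor(z) ∧ ¬Sane(z))), then x is not special: ¬Special(x). -/
theorem smullyan_not_special
    {I : Type*} (Sane Doctor Peculiar Special : I → Prop)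
    (h4 : ∀ x, Peculiar x ↔ (Sane x ↔ ¬ Doctor x))
    (h5 : ∀ x, Special x ↔ ∀ y, (¬ Doctor y ↔ (Sane y ↔ Peculiar x)))
    (x : I) (hx : Peculiar x)
    (hz : ∃ z, (Doctor z ∧ Sane z) ∨ (¬ Doctor z ∧ ¬ Sane z)) :
    ¬ Special x := by
  obtain ⟨z, hzz⟩ := hz
  intro hs
  have := (h5 x).mp hs z
  tauto
end

section
/- Second case, second subcase of Theorem 2: the hypotheses (4) ∀x, Peculiar(x) ↔ (Sane(x) ↔ ¬Doctor(x)), (5) ∀x, Special(x) ↔ ∀y, (¬Doctor(y) ↔ (Sane(y) ↔ Peculiar(x))), (7) ∀x ∀y, (Sane(x) ↔ Special(y)) → (Sane(bestFriend(x)) ↔ ¬Doctor(y)), together with the existence of an insane doctor (∃x, Doctor(x) ∧ ¬Sane(x)), a sane patient (∃y, ¬Doctor(y) ∧ Sane(y)), and an inhabitant that is either a sane doctor or an insane patient (∃z, (Doctor(z) ∧ Sane(z)) ∨ (¬Doctor(z) ∧ ¬Sane(z))), are jointly contradictory (imply False). -/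
theorem smullyan_theorem2_second_case_second_subcase
    {I : Type*} (Sane Doctor Peculiar Special : I → Prop)
    (bestFriend : I → I)
    (h4 : ∀ x, Peculiar x ↔ (Sane x ↔ ¬ Doctor x))
    (h5 : ∀ x, Special x ↔ ∀ y, (¬ Doctor y ↔ (Sane y ↔ Peculiar x)))
    (h7 : ∀ x y, (Sane x ↔ Special y) → (Sane (bestFriend x) ↔ ¬ Doctor y))
    (hInsaneDoc : ∃ x, Doctor x ∧ ¬ Sane x)
    (hSanePat : ∃ y, ¬ Doctor y ∧ Sane y)
    (hz : ∃ z, (Doctor z ∧ Sane z) ∨ (¬ Doctor z ∧ ¬ Sane z)) : False := by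
  obtain ⟨x0, hx0d, hx0s⟩ := hInsaneDoc
  obtain ⟨y0, hy0d, hy0s⟩ := hSanePat
  obtain ⟨z, hz⟩ := hz
  have px0 : Peculiar x0 := (h4 x0).mpr (by tauto)
  have py0 : Peculiar y0 := (h4 y0).mpr (by tauto)
  have nsx0 : ¬ Special x0 := fun h => by
    have hh := (h5 x0).mp h z
    rcases hz with ⟨hd, hs⟩ | ⟨hd, hs⟩ <;> tauto
  have nsy0 : ¬ Special y0 := fun h => by
    have hh := (h5 y0).mp h z
    rcases hz with ⟨hd, hs⟩ | ⟨hd, hs⟩ <;> tauto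
  have h1 := h7 x0 x0 (iff_of_false hx0s nsx0)
  have h2 := h7 x0 y0 (iff_of_false hx0s nsy0)
  exact h1.mp (h2.mpr hy0d) hx0d
end

section
/- Core contradiction of Theorem 1's proof: the hypotheses (2) Doctor(Fether), (4) ∀x, Peculiar(x) ↔ (Sane(x) ↔ ¬Doctor(x)), (5) ∀x, Special(x) ↔ ∀y, (¬Doctor(y) ↔ (Sane(y) ↔ Peculiar(x))), (6) ∃x, Sane(x), (7) ∀x ∀y, (Sane(x) ↔ Special(y)) → (Sane(bestFriend(x)) ↔ ¬Doctor(y)), together with the assumptions that all doctors are insane (∀x, Doctor(x) → ¬Sane(x)) and all patients are sane (∀x, ¬Doctor(x) → Sane(x)), are jointly contradictory (imply False). -/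
theorem smullyan_theorem1_core_contradiction
    {I : Type*} (Sane Doctor Peculiar Special : I → Prop)
    (bestFriend : I → I) (Fether : I)
    (h2 : Doctor Fether)
    (h4 : ∀ x, Peculiar x ↔ (Sane x ↔ ¬ Doctor x))
    (h5 : ∀ x, Special x ↔ ∀ y, (¬ Doctor y ↔ (Sane y ↔ Peculiar x)))
    (h6 : ∃ x, Sane x)
    (h7 : ∀ x y, (Sane x ↔ Special y) → (Sane (bestFriend x) ↔ ¬ Doctor y))
    (hDoc : ∀ x, Doctor x → ¬ Sane x)
    (hPat : ∀ x, ¬ Doctor x → Sane x) : False := by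
  obtain ⟨x, hx⟩ := h6
  have hSD : ∀ z, Sane z ↔ ¬ Doctor z := fun z =>
    ⟨fun hs hd => hDoc z hd hs, hPat z⟩
  have hPec : ∀ z, Peculiar z := fun z => (h4 z).mpr (hSD z)
  have hSpec : ∀ z, Special z := fun z => (h5 z).mpr
    (fun y => ⟨fun hd => ⟨fun _ => hPec z, fun _ => (hSD y).mpr hd⟩,
               fun h => ((hSD y).mp (h.mpr (hPec z)) : _)⟩)
  have hDx : ¬ Doctor x := (hSD x).mp hx
  have h1 := h7 x x ⟨fun _ => hSpec x, fun _ => hx⟩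
  have h2' := h7 x Fether ⟨fun _ => hSpec Fether, fun _ => hx⟩
  exact (h2'.mp (h1.mpr hDx)) h2
end
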